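/- arXiv:1411.3545 — 5 statements merged into one kernel-verified Lean document; each statement's English description precedes it below -/
import Mathlib

section
/- Fix an integer r ≥ 1 and a real number c with 0 < c < 1, and for each n ≥ r set δ_n = 2^{n-1} − c·√(2^{n-1}·binom(n,r)·ln 2). Then the proportion, among Boolean functions e on F_2^n of weight at least δ_n, of those for which there exists a nonzero g ∈ RM(n,r) with d(e,0) ≥ d(e,g), tends to 1 as n → ∞; that is, #{e : wt(e) ≥ δ_n and ∃ g ∈ RM(n,r) with g ≠ 0 and wt(e) ≥ d(e,g)} / #{e : wt(e) ≥ δ_n} → 1 as n → ∞. -/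
/-- Boolean functions on `𝔽₂ⁿ`, identified with binary words of length `2^n`. -/
abbrev BF (n : ℕ) := (Fin n → ZMod 2) → ZMod 2

/-- The Reed–Muller code `RM(n,r)`: Boolean functions on `𝔽₂ⁿ` that are evaluations
of polynomials in `n` variables over `𝔽₂` of total degree at most `r`. -/
def RM (n r : ℕ) : Set (BF n) :=
  {f | ∃ p : MvPolynomial (Fin n) (ZMod 2),
    p.totalDegree ≤ r ∧ ∀ x, MvPolynomial.eval x p = f x}

/-- `δ_n = 2^{n-1} − c·√(2^{n-1}·binom(n,r)·ln 2)`. -/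
noncomputable def rmδ (r : ℕ) (c : ℝ) (n : ℕ) : ℝ :=
  2 ^ (n - 1) - c * Real.sqrt (2 ^ (n - 1) * (n.choose r) * Real.log 2)

namespace RMaux

def lin (n : ℕ) (a : Fin n → ZMod 2) : BF n := fun x => ∑ i, a i * x i

lemma lin_mem {n r : ℕ} (hr : 1 ≤ r) (a : Fin n → ZMod 2) : lin n a ∈ RM n r := by
  refine ⟨∑ i, MvPolynomial.C (a i) * MvPolynomial.X i, ?_, ?_⟩
  · refine le_trans (MvPolynomial.totalDegree_finset_sum _ _) ?_
    refine Finset.sup_le fun i _ => ?_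
    refine le_trans (MvPolynomial.totalDegree_mul _ _) ?_
    simp [MvPolynomial.totalDegree_C, MvPolynomial.totalDegree_X]
    omega
  · intro x; simp [lin]

lemma lin_sub (n : ℕ) (a b : Fin n → ZMod 2) : lin n a - lin n b = lin n (a - b) := by
  funext x
  simp [lin, sub_mul, Finset.sum_sub_distrib]

lemma lin_inj (n : ℕ) : Function.Injective (lin n) := by
  intro a b h
  funext j
  have h2 := congrFun h (Pi.single j 1)
  simpa [lin, Pi.single_apply, mul_ite, Finset.sum_ite_eq'] using h2

lemma bf_sub_eq_add {n : ℕ} (e g : BF n) : e - g = e + g := by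
  funext x
  have : ∀ u v : ZMod 2, u - v = u + v := by decide
  simp [this]

lemma bf_add_add_cancel {n : ℕ} (e g : BF n) : e + g + g = e := by
  funext x
  have : ∀ u v : ZMod 2, u + v + v = u := by decide
  simp [this]

lemma card_fun (n : ℕ) : Nat.card (Fin n → ZMod 2) = 2 ^ n := by
  simp [Nat.card_eq_fintype_card]

/-- Every "bad" `e` (no nonzero codeword at distance ≤ wt e) is a unique coset leader,
so there are few of them. -/
lemma bad_card (n r : ℕ) (hr : 1 ≤ r) :
    Nat.card {e : BF n | ∀ g ∈ RM n r, g ≠ 0 → hammingNorm e < hammingDist e g} * 2 ^ n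
      ≤ Nat.card (BF n) := by
  set Bad := {e : BF n | ∀ g ∈ RM n r, g ≠ 0 → hammingNorm e < hammingDist e g} with hBad
  have hf : Function.Injective
      (fun p : Bad × (Fin n → ZMod 2) => (p.1 : BF n) + lin n p.2) := by
    rintro ⟨⟨e₁, he₁⟩, a₁⟩ ⟨⟨e₂, he₂⟩, a₂⟩ h
    simp only at h
    by_cases hab : a₁ = a₂
    · subst hab
      have : e₁ = e₂ := by
        have := congrArg (fun f => f + lin n a₁) h
        simpa [bf_add_add_cancel] using this
      simp [this]
    · exfalso
      set g : BF n := lin n (a₁ - a₂) with hg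
      have hgRM : g ∈ RM n r := lin_mem hr _
      have hg0 : g ≠ 0 := by
        intro h0
        apply hab
        have : lin n (a₁ - a₂) = lin n 0 := by
          rw [← hg, h0]; funext x; simp [lin]
        have := lin_inj n this
        exact sub_eq_zero.mp this
      -- e₂ = e₁ + g
      have he21 : e₂ = e₁ + g := by
        have : e₁ + lin n a₁ + lin n a₂ = e₂ + lin n a₂ + lin n a₂ := by rw [h]
        rw [bf_add_add_cancel] at this
        rw [← this, hg, ← lin_sub, bf_sub_eq_add (lin n a₁) (lin n a₂)]
        abel
      have he12 : e₁ = e₂ + g := by rw [he21, bf_add_add_cancel]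
      have h1 : hammingNorm e₁ < hammingNorm e₂ := by
        have := he₁ g hgRM hg0
        rwa [hammingDist_eq_hammingNorm, neg_add_eq_sub, bf_sub_eq_add, add_comm, ← he21] at this
      have h2 : hammingNorm e₂ < hammingNorm e₁ := by
        have := he₂ g hgRM hg0
        rwa [hammingDist_eq_hammingNorm, neg_add_eq_sub, bf_sub_eq_add, add_comm, ← he12] at this
      omega
  have := Nat.card_le_card_of_injective _ hf
  rwa [Nat.card_prod, card_fun] at this


lemma norm_add_one {n : ℕ} (e : BF n) :
    hammingNorm (e + 1) + hammingNorm e = 2 ^ n := by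
  have hcard : Fintype.card (Fin n → ZMod 2) = 2 ^ n := by simp
  rw [← hcard]
  unfold hammingNorm
  have : ∀ x : Fin n → ZMod 2, ((e + 1) x ≠ 0) ↔ ¬(e x ≠ 0) := by
    intro x
    have : ∀ v : ZMod 2, (v + 1 ≠ 0) ↔ ¬(v ≠ 0) := by decide
    simpa using this (e x)
  calc (Finset.univ.filter fun x => (e + 1) x ≠ 0).card
        + (Finset.univ.filter fun x => e x ≠ 0).card
      = (Finset.univ.filter fun x => ¬(e x ≠ 0)).card
        + (Finset.univ.filter fun x => e x ≠ 0).card := by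
        congr 1
        apply Finset.card_bij (fun a _ => a) <;> simp_all
    _ = Fintype.card (Fin n → ZMod 2) := by
        rw [add_comm]
        exact Finset.card_filter_add_card_filter_not _

lemma denom_half (n : ℕ) (hn : 1 ≤ n) (δ : ℝ) (hδ : δ ≤ 2 ^ (n - 1)) :
    Nat.card (BF n) ≤ 2 * Nat.card {e : BF n | δ ≤ (hammingNorm e : ℝ)} := by
  set D := {e : BF n | δ ≤ (hammingNorm e : ℝ)} with hD
  have cover : (Set.univ : Set (BF n)) ⊆ D ∪ (fun e => e + 1) '' D := by
    intro e _
    by_cases he : e ∈ D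
    · exact Or.inl he
    · right
      refine ⟨e + 1, ?_, ?_⟩
      · have hne : (hammingNorm e : ℝ) < δ := by
          simpa [hD] using he
        have hsum := norm_add_one e
        have hcast : (hammingNorm (e + 1) : ℝ) = 2 ^ n - hammingNorm e := by
          have : (hammingNorm (e + 1) : ℝ) + hammingNorm e = 2 ^ n := by
            exact_mod_cast congrArg (fun k : ℕ => (k : ℝ)) hsum
          linarith
        have hpow : (2 : ℝ) ^ n = 2 * 2 ^ (n - 1) := by
          rw [← pow_succ']
          congr 1
          omega
        show δ ≤ (hammingNorm (e + 1) : ℝ)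
        rw [hcast, hpow]
        nlinarith [hδ, hne]
      · funext x
        have : ∀ v : ZMod 2, v + 1 + 1 = v := by decide
        simp [this]
  have h1 : Nat.card (BF n) = (Set.univ : Set (BF n)).ncard := (Set.ncard_univ _).symm
  have h2 : (Set.univ : Set (BF n)).ncard ≤ (D ∪ (fun e => e + 1) '' D).ncard :=
    Set.ncard_le_ncard cover (Set.toFinite _)
  have h3 : (D ∪ (fun e => e + 1) '' D).ncard ≤ D.ncard + ((fun e => e + 1) '' D).ncard :=
    Set.ncard_union_le _ _
  have h4 : ((fun e : BF n => e + 1) '' D).ncard = D.ncard :=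
    Set.ncard_image_of_injective _ (add_left_injective 1)
  have h5 : Nat.card D = D.ncard := Nat.card_coe_set_eq _
  omega


end RMaux

open RMaux

theorem stmt1 (r : ℕ) (hr : 1 ≤ r) (c : ℝ) (hc0 : 0 < c) (hc1 : c < 1) :
    Filter.Tendsto (fun n : ℕ =>
      (Nat.card {e : BF n |
          rmδ r c n ≤ (hammingNorm e : ℝ) ∧
          ∃ g ∈ RM n r, g ≠ 0 ∧ hammingDist e g ≤ hammingNorm e} : ℝ) /
      (Nat.card {e : BF n | rmδ r c n ≤ (hammingNorm e : ℝ)} : ℝ))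
      Filter.atTop (nhds 1) := by
  have key : ∀ n : ℕ, 1 ≤ n →
      1 - 2 * (1/2 : ℝ) ^ n ≤
        (Nat.card {e : BF n |
          rmδ r c n ≤ (hammingNorm e : ℝ) ∧
          ∃ g ∈ RM n r, g ≠ 0 ∧ hammingDist e g ≤ hammingNorm e} : ℝ) /
        (Nat.card {e : BF n | rmδ r c n ≤ (hammingNorm e : ℝ)} : ℝ) ∧
      (Nat.card {e : BF n |
          rmδ r c n ≤ (hammingNorm e : ℝ) ∧
          ∃ g ∈ RM n r, g ≠ 0 ∧ hammingDist e g ≤ hammingNorm e} : ℝ) /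
        (Nat.card {e : BF n | rmδ r c n ≤ (hammingNorm e : ℝ)} : ℝ) ≤ 1 := by
    intro n hn
    set S := {e : BF n |
        rmδ r c n ≤ (hammingNorm e : ℝ) ∧
        ∃ g ∈ RM n r, g ≠ 0 ∧ hammingDist e g ≤ hammingNorm e} with hSdef
    set D := {e : BF n | rmδ r c n ≤ (hammingNorm e : ℝ)} with hDdef
    set Bad := {e : BF n | ∀ g ∈ RM n r, g ≠ 0 → hammingNorm e < hammingDist e g} with hBaddef
    have hSD : S ⊆ D := fun e he => he.1
    have hDcover : D ⊆ S ∪ Bad := by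
      intro e he
      by_cases hx : ∃ g ∈ RM n r, g ≠ 0 ∧ hammingDist e g ≤ hammingNorm e
      · exact Or.inl ⟨he, hx⟩
      · right
        push_neg at hx
        exact hx
    have hδ : rmδ r c n ≤ 2 ^ (n - 1) :=
      sub_le_self _ (mul_nonneg hc0.le (Real.sqrt_nonneg _))
    have n1 : S.ncard ≤ D.ncard := Set.ncard_le_ncard hSD (Set.toFinite _)
    have n2 : D.ncard ≤ S.ncard + Bad.ncard :=
      (Set.ncard_le_ncard hDcover (Set.toFinite _)).trans (Set.ncard_union_le _ _)
    have n3 : Bad.ncard * 2 ^ n ≤ 2 * D.ncard := by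
      have hb := bad_card n r hr
      have hd := denom_half n hn (rmδ r c n) hδ
      rw [Nat.card_coe_set_eq, ← hBaddef] at hb
      rw [Nat.card_coe_set_eq, ← hDdef] at hd
      exact le_trans hb hd
    have n4 : 0 < D.ncard := by
      have hpos : 0 < Nat.card (BF n) := Nat.card_pos
      have hd := denom_half n hn (rmδ r c n) hδ
      rw [Nat.card_coe_set_eq, ← hDdef] at hd
      omega
    rw [Nat.card_coe_set_eq, Nat.card_coe_set_eq]
    have hd0 : (0 : ℝ) < (D.ncard : ℝ) := by exact_mod_cast n4
    have hb2 : (Bad.ncard : ℝ) * 2 ^ n ≤ 2 * (D.ncard : ℝ) := by exact_mod_cast n3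
    have hds : (D.ncard : ℝ) ≤ (S.ncard : ℝ) + (Bad.ncard : ℝ) := by exact_mod_cast n2
    have hsd : (S.ncard : ℝ) ≤ (D.ncard : ℝ) := by exact_mod_cast n1
    constructor
    · rw [le_div_iff₀ hd0]
      have hp : (0 : ℝ) < 2 ^ n := by positivity
      have h2 : (1/2 : ℝ) ^ n * 2 ^ n = 1 := by
        rw [div_pow, one_pow]
        field_simp
      have h3 : (Bad.ncard : ℝ) ≤ 2 * (1/2 : ℝ) ^ n * (D.ncard : ℝ) := by
        have h4 := mul_le_mul_of_nonneg_right hb2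
          (le_of_lt (pow_pos (by norm_num : (0:ℝ) < 1/2) n))
        calc (Bad.ncard : ℝ) = (Bad.ncard : ℝ) * 2 ^ n * (1/2 : ℝ) ^ n := by
              rw [mul_assoc, mul_comm ((2:ℝ) ^ n), h2, mul_one]
          _ ≤ 2 * (D.ncard : ℝ) * (1/2 : ℝ) ^ n := h4
          _ = 2 * (1/2 : ℝ) ^ n * (D.ncard : ℝ) := by ring
      nlinarith
    · rw [div_le_one hd0]
      exact hsd
  have hlow : Filter.Tendsto (fun n : ℕ => 1 - 2 * (1/2 : ℝ) ^ n) Filter.atTop (nhds 1) := by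
    have h0 : Filter.Tendsto (fun n : ℕ => (1/2 : ℝ) ^ n) Filter.atTop (nhds 0) :=
      tendsto_pow_atTop_nhds_zero_of_lt_one (by norm_num) (by norm_num)
    have h1 := (h0.const_mul (2 : ℝ)).const_sub (1 : ℝ)
    simpa using h1
  refine tendsto_of_tendsto_of_tendsto_of_le_of_le' hlow tendsto_const_nhds ?_ ?_
  · filter_upwards [Filter.eventually_ge_atTop 1] with n hn
    exact (key n hn).1
  · filter_upwards [Filter.eventually_ge_atTop 1] with n hn
    exact (key n hn).2
end

section
/- Let n be a positive integer and k an integer with 0 ≤ k ≤ n. Then Σ_{i=0}^{k} binom(2n, i) < 2^{2n} · exp(−(n−k)²/n). -/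
open Finset Real

theorem stmt9 (n k : ℕ) (hn : 0 < n) (hk : k ≤ n) :
    (∑ i ∈ Finset.Iic k, ((2 * n).choose i : ℝ)) <
      2 ^ (2 * n) * Real.exp (-(((n : ℝ) - (k : ℝ)) ^ 2 / (n : ℝ))) := by
  have hN : (0:ℝ) < n := by exact_mod_cast hn
  rcases eq_or_lt_of_le hk with rfl | hkn
  · have h2 : ∑ i ∈ Finset.range (2*k+1), ((2 * k).choose i : ℝ) = 2^(2*k) := by
      rw [← Nat.cast_sum, Nat.sum_range_choose]; push_cast; ring
    have h1 : (∑ i ∈ Finset.Iic k, ((2 * k).choose i : ℝ)) <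
        ∑ i ∈ Finset.range (2*k+1), ((2 * k).choose i : ℝ) := by
      apply Finset.sum_lt_sum_of_subset (i := 2*k)
      · intro x hx; simp only [Finset.mem_Iic] at hx; simp only [Finset.mem_range]; omega
      · simp only [Finset.mem_range]; omega
      · simp only [Finset.mem_Iic]; omega
      · simp [Nat.choose_self]
      · intro j _ _; positivity
    have hz : (-(((k:ℝ) - (k:ℝ)) ^ 2 / (k:ℝ))) = 0 := by norm_num
    rw [hz, Real.exp_zero, mul_one]
    exact h2 ▸ h1
  · set t : ℝ := 2 * ((n:ℝ) - k) / n with ht_def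
    have hKN : (k:ℝ) < n := by exact_mod_cast hkn
    have ht : 0 < t := by
      apply div_pos _ hN; linarith
    have stepA : (∑ i ∈ Finset.Iic k, ((2 * n).choose i : ℝ)) ≤
        ∑ i ∈ Finset.Iic k, ((2 * n).choose i : ℝ) * Real.exp (t * ((k:ℝ) - i)) := by
      apply Finset.sum_le_sum
      intro i hi
      simp only [Finset.mem_Iic] at hi
      have : (1:ℝ) ≤ Real.exp (t * ((k:ℝ) - i)) := by
        apply Real.one_le_exp
        have : (i:ℝ) ≤ k := by exact_mod_cast hi
        exact mul_nonneg ht.le (by linarith)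
      nlinarith [Nat.cast_nonneg (α := ℝ) ((2*n).choose i)]
    have stepB : (∑ i ∈ Finset.Iic k, ((2 * n).choose i : ℝ) * Real.exp (t * ((k:ℝ) - i))) <
        ∑ i ∈ Finset.range (2*n+1), ((2 * n).choose i : ℝ) * Real.exp (t * ((k:ℝ) - i)) := by
      apply Finset.sum_lt_sum_of_subset (i := 2*n)
      · intro x hx; simp only [Finset.mem_Iic] at hx; simp only [Finset.mem_range]; omega
      · simp only [Finset.mem_range]; omega
      · simp only [Finset.mem_Iic]; omega
      · simp [Nat.choose_self]; positivity
      · intro j _ _; positivity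
    have stepC : (∑ i ∈ Finset.range (2*n+1), ((2 * n).choose i : ℝ) * Real.exp (t * ((k:ℝ) - i)))
        = Real.exp (t * k) * (Real.exp (-t) + 1) ^ (2*n) := by
      have key : ∀ i : ℕ, Real.exp (t * ((k:ℝ) - i)) = Real.exp (-t) ^ i * Real.exp (t * k) := by
        intro i
        rw [← Real.exp_nat_mul, ← Real.exp_add]
        congr 1; ring
      rw [add_pow, Finset.mul_sum]
      apply Finset.sum_congr rfl
      intro i hi
      rw [key, one_pow]
      ring
    have stepD : Real.exp (-t) + 1 = 2 * Real.exp (-t/2) * Real.cosh (t/2) := by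
      have h : 2 * Real.exp (-t/2) * ((Real.exp (t/2) + Real.exp (-(t/2)))/2)
          = Real.exp (-t/2 + t/2) + Real.exp (-t/2 + -(t/2)) := by
        rw [Real.exp_add, Real.exp_add]; ring
      rw [Real.cosh_eq, h, show (-t/2 + t/2 : ℝ) = 0 by ring,
        show (-t/2 + -(t/2) : ℝ) = -t by ring, Real.exp_zero]
      ring
    have stepE : (Real.exp (-t) + 1) ^ (2*n) ≤
        2 ^ (2*n) * Real.exp (-t * n + n * t^2 / 4) := by
      rw [stepD, mul_pow, mul_pow]
      have h1 : Real.cosh (t/2) ^ (2*n) ≤ Real.exp ((t/2)^2/2) ^ (2*n) := by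
        apply pow_le_pow_left₀ (by positivity) (Real.cosh_le_exp_half_sq _)
      calc 2 ^ (2*n) * Real.exp (-t/2) ^ (2*n) * Real.cosh (t/2) ^ (2*n)
          ≤ 2 ^ (2*n) * Real.exp (-t/2) ^ (2*n) * Real.exp ((t/2)^2/2) ^ (2*n) := by
            apply mul_le_mul_of_nonneg_left h1; positivity
        _ = 2 ^ (2*n) * Real.exp (-t * n + n * t^2 / 4) := by
            rw [← Real.exp_nat_mul, ← Real.exp_nat_mul, mul_assoc, ← Real.exp_add]
            push_cast
            ring_nf
    have final : Real.exp (t * k) * (2 ^ (2*n) * Real.exp (-t * n + n * t^2 / 4))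
        = 2 ^ (2*n) * Real.exp (-(((n : ℝ) - (k : ℝ)) ^ 2 / (n : ℝ))) := by
      rw [← mul_assoc, mul_comm (Real.exp (t*k)), mul_assoc, ← Real.exp_add]
      congr 1
      rw [ht_def]
      field_simp
      ring
    calc (∑ i ∈ Finset.Iic k, ((2 * n).choose i : ℝ))
        ≤ ∑ i ∈ Finset.Iic k, ((2 * n).choose i : ℝ) * Real.exp (t * ((k:ℝ) - i)) := stepA
      _ < ∑ i ∈ Finset.range (2*n+1), ((2 * n).choose i : ℝ) * Real.exp (t * ((k:ℝ) - i)) := stepB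
      _ = Real.exp (t * k) * (Real.exp (-t) + 1) ^ (2*n) := stepC
      _ ≤ Real.exp (t * k) * (2 ^ (2*n) * Real.exp (-t * n + n * t^2 / 4)) := by
          apply mul_le_mul_of_nonneg_left stepE; positivity
      _ = _ := final
end

section
/- Let C be a linear code over F_2 of length m with minimum distance d_C and covering radius r_C, with coset leaders chosen as the lexicographically smallest minimum-weight vectors. Then for every t = 0, 1, …, m−1 one has ε_C(t+1) ≤ ε_C(t), and the inequality is strict for t_C ≤ t ≤ r_C, where t_C = ⌊(d_C − 1)/2⌋. -/
/-- `a` is lexicographically at most `b`, with respect to the enumeration of the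
coordinates given by the (strict total order) relation `lt`. -/
def LexLe {ι : Type*} (lt : ι → ι → Prop) (a b : ι → ZMod 2) : Prop :=
  a = b ∨ ∃ i, (∀ j, lt j i → a j = b j) ∧ a i = 0 ∧ b i = 1

/-- `e` is a correctable error for the code `C` (with coordinates enumerated by `lt`):
`e` is the coset leader of its coset `e + C`, i.e. the lexicographically smallest
among the minimum-weight vectors of the coset. -/
def IsCorrectable {ι : Type*} [Fintype ι] (lt : ι → ι → Prop)
    (C : Set (ι → ZMod 2)) (e : ι → ZMod 2) : Prop :=
  (∀ e', e' - e ∈ C → hammingNorm e ≤ hammingNorm e') ∧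
  (∀ e', e' - e ∈ C → hammingNorm e' = hammingNorm e → LexLe lt e e')

/-- `ε_C(t)`: the number of correctable errors of weight `t` divided by `binom(m,t)`. -/
noncomputable def epsC {ι : Type*} [Fintype ι] (lt : ι → ι → Prop)
    (C : Set (ι → ZMod 2)) (t : ℕ) : ℝ :=
  (Nat.card {e : ι → ZMod 2 | IsCorrectable lt C e ∧ hammingNorm e = t} : ℝ) /
    ((Fintype.card ι).choose t : ℝ)

/-- The minimum distance of a linear code: the least weight of a nonzero codeword. -/
noncomputable def minDist {ι : Type*} [Fintype ι]
    (C : Submodule (ZMod 2) (ι → ZMod 2)) : ℕ :=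
  sInf {w | ∃ g ∈ C, g ≠ 0 ∧ hammingNorm g = w}

/-- The covering radius of a code: the maximum over all words of the distance to the code. -/
noncomputable def covRad {ι : Type*} [Fintype ι]
    (C : Submodule (ZMod 2) (ι → ZMod 2)) : ℕ :=
  sSup {w | ∃ f : ι → ZMod 2, w = sInf {d | ∃ g ∈ C, hammingDist f g = d}}

open Finset

namespace S11

variable {m : ℕ}

lemma zmod2_cases (x : ZMod 2) : x = 0 ∨ x = 1 := by revert x; decide

lemma zmod2_ne_zero {x : ZMod 2} : x ≠ 0 ↔ x = 1 := by revert x; decide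

lemma zmod2_oao : (1 : ZMod 2) + 1 = 0 := by decide

lemma zmod2_one_ne_zero : (1 : ZMod 2) ≠ 0 := by decide

lemma sub_eq_add2 (a b : Fin m → ZMod 2) : a - b = a + b := by
  funext j
  rw [Pi.sub_apply, Pi.add_apply, CharTwo.sub_eq_add]

/-- flip coordinate i -/
def fl (i : Fin m) (e : Fin m → ZMod 2) : Fin m → ZMod 2 := e + Pi.single i 1

/-- support as a Finset -/
def suppF (x : Fin m → ZMod 2) : Finset (Fin m) := {j | x j ≠ 0}

lemma wt_eq (x : Fin m → ZMod 2) : hammingNorm x = (suppF x).card := rfl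

lemma mem_suppF {x : Fin m → ZMod 2} {j} : j ∈ suppF x ↔ x j = 1 := by
  simp [suppF, zmod2_ne_zero]

lemma not_mem_suppF {x : Fin m → ZMod 2} {j} : j ∉ suppF x ↔ x j = 0 := by
  simp only [suppF, Finset.mem_filter, Finset.mem_univ, true_and, not_not]

lemma fl_apply (e : Fin m → ZMod 2) (i j : Fin m) :
    fl i e j = if j = i then e j + 1 else e j := by
  by_cases h : j = i <;> simp [fl, h, Pi.single_apply]

lemma fl_fl (e : Fin m → ZMod 2) (i : Fin m) : fl i (fl i e) = e := by
  funext j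
  by_cases h : j = i <;> simp [fl_apply, h, add_assoc, zmod2_oao]

lemma suppF_fl0 {e : Fin m → ZMod 2} {i : Fin m} (h : e i = 0) :
    suppF (fl i e) = insert i (suppF e) := by
  ext j
  by_cases hj : j = i
  · subst hj; simp [suppF, fl_apply, h]
  · simp [suppF, fl_apply, hj]

lemma suppF_fl1 {e : Fin m → ZMod 2} {i : Fin m} (h : e i = 1) :
    suppF (fl i e) = (suppF e).erase i := by
  ext j
  by_cases hj : j = i
  · subst hj; simp [suppF, fl_apply, h, zmod2_oao]
  · simp [suppF, fl_apply, hj]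

lemma wt_fl0 {e : Fin m → ZMod 2} {i : Fin m} (h : e i = 0) :
    hammingNorm (fl i e) = hammingNorm e + 1 := by
  rw [wt_eq, wt_eq, suppF_fl0 h, card_insert_of_notMem (by simp [suppF, h])]

lemma wt_fl1 {e : Fin m → ZMod 2} {i : Fin m} (h : e i = 1) :
    hammingNorm (fl i e) + 1 = hammingNorm e := by
  rw [wt_eq, wt_eq, suppF_fl1 h]
  have hm : i ∈ suppF e := mem_suppF.2 h
  rw [card_erase_of_mem hm]
  have := card_pos.2 ⟨i, hm⟩
  omega

lemma lexLe_refl (x : Fin m → ZMod 2) : LexLe (· < ·) x x := Or.inl rfl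

lemma lexLe_total (x y : Fin m → ZMod 2) : LexLe (· < ·) x y ∨ LexLe (· < ·) y x := by
  by_cases hxy : x = y
  · exact Or.inl (Or.inl hxy)
  · have hD : ({j | x j ≠ y j} : Finset (Fin m)).Nonempty := by
      obtain ⟨j, hj⟩ := Function.ne_iff.1 hxy
      exact ⟨j, by simpa using hj⟩
    set i := ({j | x j ≠ y j} : Finset (Fin m)).min' hD with hi
    have hne : x i ≠ y i := by
      have := Finset.min'_mem _ hD
      simpa using this
    have hpre : ∀ j, j < i → x j = y j := by
      intro j hj
      by_contra hc
      exact absurd (Finset.min'_le _ j (by simpa using hc)) (not_le.2 hj)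
    rcases zmod2_cases (x i) with h0 | h1
    · refine Or.inl (Or.inr ⟨i, hpre, h0, ?_⟩)
      rcases zmod2_cases (y i) with h | h
      · exact absurd (h0.trans h.symm) hne
      · exact h
    · refine Or.inr (Or.inr ⟨i, fun j hj => (hpre j hj).symm, ?_, h1⟩)
      rcases zmod2_cases (y i) with h | h
      · exact h
      · exact absurd (h1.trans h.symm) hne

lemma lexLe_trans {x y z : Fin m → ZMod 2} (h1 : LexLe (· < ·) x y) (h2 : LexLe (· < ·) y z) :
    LexLe (· < ·) x z := by
  rcases h1 with rfl | ⟨i, hpi, hxi, hyi⟩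
  · exact h2
  rcases h2 with rfl | ⟨k, hpk, hyk, hzk⟩
  · exact Or.inr ⟨i, hpi, hxi, hyi⟩
  rcases lt_trichotomy i k with h | rfl | h
  · exact Or.inr ⟨i, fun j hj => (hpi j hj).trans (hpk j (hj.trans h)), hxi,
      (hpk i h).symm.trans hyi⟩
  · exact Or.inr ⟨i, fun j hj => (hpi j hj).trans (hpk j hj), hxi, hzk⟩
  · exact Or.inr ⟨k, fun j hj => (hpi j (hj.trans h)).trans (hpk j hj), (hpi k h).trans hyk, hzk⟩

lemma exists_lex_min (T : Finset (Fin m → ZMod 2)) (hT : T.Nonempty) :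
    ∃ x ∈ T, ∀ y ∈ T, LexLe (· < ·) x y := by
  classical
  revert hT
  induction T using Finset.induction_on with
  | empty => exact fun hT => absurd hT (by simp)
  | @insert a T ha ih =>
    intro _
    rcases T.eq_empty_or_nonempty with rfl | hTne
    · exact ⟨a, by simp, by simp [lexLe_refl]⟩
    · obtain ⟨x, hxT, hmin⟩ := ih hTne
      rcases lexLe_total a x with h | h
      · refine ⟨a, mem_insert_self a T, ?_⟩
        intro y hy
        rcases mem_insert.1 hy with rfl | hy
        · exact Or.inl rfl
        · exact lexLe_trans h (hmin y hy)
      · refine ⟨x, mem_insert_of_mem hxT, ?_⟩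
        intro y hy
        rcases mem_insert.1 hy with rfl | hy
        · exact h
        · exact hmin y hy

variable {C : Submodule (ZMod 2) (Fin m → ZMod 2)}

lemma mem_coset_trans {e f e' : Fin m → ZMod 2} (h1 : e - f ∈ C) (h2 : e' - e ∈ C) :
    e' - f ∈ C := by
  have := C.add_mem h2 h1
  rwa [sub_add_sub_cancel] at this

/-- every coset has a leader -/
lemma exists_leader (f : Fin m → ZMod 2) :
    ∃ e, IsCorrectable (· < ·) (C : Set (Fin m → ZMod 2)) e ∧ e - f ∈ C := by
  classical
  set S : Finset (Fin m → ZMod 2) := {x | x - f ∈ C} with hS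
  have hfS : f ∈ S := by simp [hS]
  have hSne : S.Nonempty := ⟨f, hfS⟩
  set n := S.inf' hSne hammingNorm with hn
  set T : Finset (Fin m → ZMod 2) := {x ∈ S | hammingNorm x = n} with hT
  have hTne : T.Nonempty := by
    obtain ⟨x, hx1, hx2⟩ := S.exists_mem_eq_inf' hSne hammingNorm
    exact ⟨x, by simp [hT, hx1, hx2.symm, hn]⟩
  obtain ⟨e, heT, hlex⟩ := exists_lex_min T hTne
  have heS : e ∈ S := (mem_filter.1 heT).1
  have hewt : hammingNorm e = n := (mem_filter.1 heT).2
  have heC : e - f ∈ C := by simpa [hS] using heS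
  refine ⟨e, ⟨?_, ?_⟩, heC⟩
  · intro e' he'
    have he'S : e' ∈ S := by
      simp only [hS, Finset.mem_filter, Finset.mem_univ, true_and]
      exact mem_coset_trans heC he'
    calc hammingNorm e = n := hewt
    _ ≤ hammingNorm e' := inf'_le _ he'S
  · intro e' he' hwt'
    have he'S : e' ∈ S := by
      simp only [hS, Finset.mem_filter, Finset.mem_univ, true_and]
      exact mem_coset_trans heC he'
    exact hlex e' (mem_filter.2 ⟨he'S, by rw [hwt', hewt]⟩)

/-- the distance from a correctable error to the code is its weight -/
lemma D_eq_wt {e : Fin m → ZMod 2}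
    (hmin : ∀ e', e' - e ∈ (C : Set (Fin m → ZMod 2)) → hammingNorm e ≤ hammingNorm e') :
    sInf {d | ∃ g ∈ C, hammingDist e g = d} = hammingNorm e := by
  apply le_antisymm
  · exact Nat.sInf_le ⟨0, C.zero_mem, hammingDist_zero_right e⟩
  · have hne : {d | ∃ g ∈ C, hammingDist e g = d}.Nonempty :=
      ⟨_, 0, C.zero_mem, rfl⟩
    obtain ⟨g, hg, hd⟩ := Nat.sInf_mem hne
    rw [← hd, hammingDist_eq_hammingNorm]
    apply hmin
    have h : -e + g - e = g := by
      funext j; simp only [Pi.add_apply, Pi.sub_apply, Pi.neg_apply]; generalize g j = a; generalize e j = b; revert a b; decide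
    rw [h]
    exact hg

lemma covRad_bddAbove :
    BddAbove {w | ∃ f : Fin m → ZMod 2, w = sInf {d | ∃ g ∈ C, hammingDist f g = d}} := by
  refine ⟨m, fun w hw => ?_⟩
  obtain ⟨f, rfl⟩ := hw
  have h1 : sInf {d | ∃ g ∈ C, hammingDist f g = d} ≤ hammingDist f 0 :=
    Nat.sInf_le ⟨0, C.zero_mem, rfl⟩
  calc sInf {d | ∃ g ∈ C, hammingDist f g = d} ≤ hammingDist f 0 := h1
  _ ≤ Fintype.card (Fin m) := hammingDist_le_card_fintype
  _ = m := Fintype.card_fin m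

lemma wt_le_covRad {e : Fin m → ZMod 2}
    (he : IsCorrectable (· < ·) (C : Set (Fin m → ZMod 2)) e) :
    hammingNorm e ≤ covRad C := by
  have h1 : hammingNorm e ∈
      {w | ∃ f : Fin m → ZMod 2, w = sInf {d | ∃ g ∈ C, hammingDist f g = d}} :=
    ⟨e, (D_eq_wt he.1).symm⟩
  exact le_csSup covRad_bddAbove h1

lemma exists_correctable_covRad :
    ∃ e, IsCorrectable (· < ·) (C : Set (Fin m → ZMod 2)) e ∧ hammingNorm e = covRad C := by
  have hne : {w | ∃ f : Fin m → ZMod 2, w = sInf {d | ∃ g ∈ C, hammingDist f g = d}}.Nonempty :=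
    ⟨_, 0, rfl⟩
  obtain ⟨f, hf⟩ := Nat.sSup_mem hne covRad_bddAbove
  obtain ⟨e, he, heC⟩ := exists_leader (C := C) f
  refine ⟨e, he, ?_⟩
  have h1 : sInf {d | ∃ g ∈ C, hammingDist f g = d} = hammingNorm e := by
    apply le_antisymm
    · refine Nat.sInf_le ⟨f - e, ?_, ?_⟩
      · have h : f - e = -(e - f) := by abel
        rw [h]; exact C.neg_mem heC
      · rw [hammingDist_eq_hammingNorm]
        congr 1
        funext j; simp only [Pi.add_apply, Pi.sub_apply, Pi.neg_apply]; generalize f j = a; generalize e j = b; revert a b; decide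
    · have hne2 : {d | ∃ g ∈ C, hammingDist f g = d}.Nonempty := ⟨_, 0, C.zero_mem, rfl⟩
      obtain ⟨g, hg, hd⟩ := Nat.sInf_mem hne2
      rw [← hd, hammingDist_eq_hammingNorm]
      apply he.1
      have h : -f + g - e = (f - e) + -g := by
        funext j; simp only [Pi.add_apply, Pi.sub_apply, Pi.neg_apply]; generalize f j = a; generalize g j = c; generalize e j = b; revert a b c; decide
      rw [h]
      refine C.add_mem ?_ (C.neg_mem hg)
      have h2 : f - e = -(e - f) := by abel
      rw [h2]; exact C.neg_mem heC
  rw [show covRad C = _ from hf, h1]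

/-- the key monotonicity step: removing a coordinate from a correctable error keeps it
correctable -/
lemma step_down {e : Fin m → ZMod 2}
    (he : IsCorrectable (· < ·) (C : Set (Fin m → ZMod 2)) e) {i : Fin m} (hi : e i = 1) :
    IsCorrectable (· < ·) (C : Set (Fin m → ZMod 2)) (fl i e) := by
  set u := fl i e with hu
  have hui : u i = 0 := by simp [hu, fl_apply, hi, zmod2_oao]
  have hue : fl i u = e := fl_fl e i
  have hwtu : hammingNorm u + 1 = hammingNorm e := wt_fl1 hi
  have hmemb : ∀ e' : Fin m → ZMod 2, e' - u ∈ C → fl i e' - e ∈ C := by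
    intro e' he'
    have h : fl i e' - e = e' - u := by
      rw [hu]
      unfold fl
      rw [sub_eq_add2, sub_eq_add2]
      abel
    rwa [h]
  constructor
  · intro e' he'
    have h1 := he.1 _ (hmemb e' he')
    have h2 : hammingNorm (fl i e') ≤ hammingNorm e' + 1 := by
      rcases zmod2_cases (e' i) with h | h
      · rw [wt_fl0 h]
      · have := wt_fl1 h
        omega
    omega
  · intro e' he' hwt'
    have h1 := he.1 _ (hmemb e' he')
    rcases zmod2_cases (e' i) with h0 | h1'
    · -- e' i = 0 : equal weights, use lex property of e
      have hw : hammingNorm (fl i e') = hammingNorm e := by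
        rw [wt_fl0 h0, hwt']
        omega
      have hlex := he.2 _ (hmemb e' he') hw
      rcases hlex with heq | ⟨j, hpre, hj0, hj1⟩
      · left
        have : fl i e = fl i (fl i e') := by rw [← heq]
        rw [fl_fl] at this
        rw [hu, this]
      · have hji : j ≠ i := by
          intro h
          rw [h, hi] at hj0
          exact zmod2_one_ne_zero hj0
        refine Or.inr ⟨j, ?_, ?_, ?_⟩
        · intro k hk
          by_cases hki : k = i
          · rw [hki, hui, h0]
          · rw [hu, fl_apply]
            simp only [hki, if_neg, if_false]
            have := hpre k hk
            rw [fl_apply] at this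
            simpa [hki] using this
        · rw [hu, fl_apply]
          simp only [hji, if_false]
          exact hj0
        · have := hj1
          rw [fl_apply] at this
          simpa [hji] using this
    · -- e' i = 1 : contradiction with minimality
      exfalso
      have h2 := wt_fl1 h1'
      omega

/-- every weight below that of a correctable error is achieved by a correctable error -/
lemma exists_correctable_of_le {t : ℕ} (ht : t ≤ covRad C) :
    ∃ e, IsCorrectable (· < ·) (C : Set (Fin m → ZMod 2)) e ∧ hammingNorm e = t := by
  obtain ⟨e0, he0, hwt0⟩ := exists_correctable_covRad (C := C)
  have key : ∀ k, ∀ e, IsCorrectable (· < ·) (C : Set (Fin m → ZMod 2)) e →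
      hammingNorm e = t + k →
      ∃ u, IsCorrectable (· < ·) (C : Set (Fin m → ZMod 2)) u ∧ hammingNorm u = t := by
    intro k
    induction k with
    | zero => exact fun e he hwt => ⟨e, he, by omega⟩
    | succ k ih =>
      intro e he hwt
      have hne : (suppF e).Nonempty := by
        rw [← card_pos, ← wt_eq]
        omega
      obtain ⟨i, hi⟩ := hne
      have hi1 : e i = 1 := mem_suppF.1 hi
      have h1 := step_down he hi1
      have h2 := wt_fl1 hi1
      exact ih _ h1 (by omega)
  exact key (covRad C - t) e0 he0 (by omega)

end S11
namespace S11
variable {m : ℕ} {C : Submodule (ZMod 2) (Fin m → ZMod 2)}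

open Classical in
/-- the finset of correctable errors of weight `t` -/
noncomputable def Ft (C : Submodule (ZMod 2) (Fin m → ZMod 2)) (t : ℕ) :
    Finset (Fin m → ZMod 2) :=
  {e | IsCorrectable (· < ·) (C : Set (Fin m → ZMod 2)) e ∧ hammingNorm e = t}

lemma mem_Ft {t : ℕ} {e : Fin m → ZMod 2} :
    e ∈ Ft C t ↔ IsCorrectable (· < ·) (C : Set (Fin m → ZMod 2)) e ∧ hammingNorm e = t := by
  simp [Ft]

lemma epsC_eq (t : ℕ) :
    epsC (· < ·) (C : Set (Fin m → ZMod 2)) t = ((Ft C t).card : ℝ) / (m.choose t : ℝ) := by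
  classical
  unfold epsC
  rw [Fintype.card_fin]
  congr 2
  rw [Nat.card_eq_fintype_card, Fintype.card_subtype]
  congr 1

lemma Ft_nonempty {t : ℕ} (ht : t ≤ covRad C) : (Ft C t).Nonempty := by
  obtain ⟨e, he, hwt⟩ := exists_correctable_of_le (C := C) ht
  exact ⟨e, mem_Ft.2 ⟨he, hwt⟩⟩

lemma count_le (t : ℕ) :
    (t + 1) * (Ft C (t + 1)).card ≤ (m - t) * (Ft C t).card ∧
      ((∃ u i, u ∈ Ft C t ∧ u i = 0 ∧
          ¬ IsCorrectable (· < ·) (C : Set (Fin m → ZMod 2)) (fl i u)) →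
        (t + 1) * (Ft C (t + 1)).card < (m - t) * (Ft C t).card) := by
  classical
  set A : Finset (Σ _ : Fin m → ZMod 2, Fin m) :=
    (Ft C (t + 1)).sigma (fun e => ({i | e i = 1} : Finset (Fin m))) with hA
  set B : Finset (Σ _ : Fin m → ZMod 2, Fin m) :=
    (Ft C t).sigma (fun u => ({i | u i = 0} : Finset (Fin m))) with hB
  have hAcard : A.card = (t + 1) * (Ft C (t + 1)).card := by
    rw [hA, card_sigma]
    rw [Finset.sum_congr rfl (fun e he => ?_), Finset.sum_const, smul_eq_mul, mul_comm]
    have hwt : hammingNorm e = t + 1 := (mem_Ft.1 he).2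
    rw [← hwt, wt_eq]
    congr 1
    ext j
    simp [suppF, zmod2_ne_zero]
  have hBcard : B.card = (m - t) * (Ft C t).card := by
    rw [hB, card_sigma]
    rw [Finset.sum_congr rfl (fun u hu => ?_), Finset.sum_const, smul_eq_mul, mul_comm]
    have hwt : hammingNorm u = t := (mem_Ft.1 hu).2
    have h1 : ({i | u i = 0} : Finset (Fin m)).card + ({i | ¬ u i = 0} : Finset (Fin m)).card
        = m := by
      rw [Finset.card_filter_add_card_filter_not, Finset.card_univ, Fintype.card_fin]
    have h2 : ({i | ¬ u i = 0} : Finset (Fin m)).card = t := by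
      rw [← hwt, wt_eq]
      congr 1
    have h3 : t ≤ m := by omega
    omega
  set φ : (Σ _ : Fin m → ZMod 2, Fin m) → (Σ _ : Fin m → ZMod 2, Fin m) :=
    fun p => ⟨fl p.2 p.1, p.2⟩ with hφ
  have hmaps : ∀ p ∈ A, φ p ∈ B := by
    rintro ⟨e, i⟩ hp
    rw [hA, mem_sigma] at hp
    obtain ⟨he, hi⟩ := hp
    have hi1 : e i = 1 := by simpa using hi
    obtain ⟨hcorr, hwt⟩ := mem_Ft.1 he
    rw [hB, mem_sigma]
    constructor
    · refine mem_Ft.2 ⟨step_down hcorr hi1, ?_⟩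
      have h5 : hammingNorm (fl i e) + 1 = t + 1 := by rw [wt_fl1 hi1, hwt]
      exact Nat.succ_injective h5
    · simp [hφ, fl_apply, hi1, zmod2_oao]
  have hinj : Set.InjOn φ A := by
    rintro ⟨e, i⟩ _ ⟨e', i'⟩ _ heq
    obtain ⟨h1, h2⟩ := Sigma.ext_iff.1 heq
    have h2' : i = i' := eq_of_heq h2
    have h1' : fl i e = fl i' e' := h1
    refine Sigma.ext ?_ (heq_of_eq_of_heq rfl (h2' ▸ HEq.rfl))
    show e = e'
    have h3 : fl i' (fl i e) = fl i' (fl i' e') := by rw [h1']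
    rw [h2', fl_fl] at h3
    rw [fl_fl] at h3
    exact h3
  have hle : A.card ≤ B.card := Finset.card_le_card_of_injOn φ hmaps hinj
  constructor
  · omega
  · rintro ⟨u, i, huF, hui, hnc⟩
    have hwitB : (⟨u, i⟩ : Σ _ : Fin m → ZMod 2, Fin m) ∈ B := by
      rw [hB, mem_sigma]
      exact ⟨huF, by simpa using hui⟩
    have hwitn : (⟨u, i⟩ : Σ _ : Fin m → ZMod 2, Fin m) ∉ A.image φ := by
      intro hmem
      obtain ⟨⟨e, j⟩, hpA, heq⟩ := Finset.mem_image.1 hmem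
      obtain ⟨h1, h2⟩ := Sigma.ext_iff.1 heq
      have h2' : j = i := eq_of_heq h2
      have h1' : fl j e = u := h1
      rw [hA, mem_sigma] at hpA
      obtain ⟨heF, _⟩ := hpA
      apply hnc
      have h4 : fl i u = e := by rw [← h2', ← h1', fl_fl]
      rw [h4]
      exact (mem_Ft.1 heF).1
    have hss : A.image φ ⊂ B := by
      refine Finset.ssubset_iff_of_subset ?_ |>.2 ⟨⟨u, i⟩, hwitB, hwitn⟩
      intro p hp
      obtain ⟨q, hq, rfl⟩ := Finset.mem_image.1 hp
      exact hmaps q hq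
    have hlt : A.card < B.card := by
      have := Finset.card_lt_card hss
      rwa [Finset.card_image_of_injOn hinj] at this
    omega

end S11
namespace S11
variable {m : ℕ} {C : Submodule (ZMod 2) (Fin m → ZMod 2)}

lemma suppF_add (e g : Fin m → ZMod 2) :
    suppF (e + g) = (suppF e \ suppF g) ∪ (suppF g \ suppF e) := by
  ext j
  simp only [suppF, mem_filter, mem_univ, true_and, mem_union, mem_sdiff, Pi.add_apply]
  rcases zmod2_cases (e j) with h | h <;> rcases zmod2_cases (g j) with h' | h' <;>
    simp [h, h', zmod2_oao]

lemma wt_add (e g : Fin m → ZMod 2) :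
    hammingNorm (e + g) + 2 * ((suppF e ∩ suppF g).card) = hammingNorm e + hammingNorm g := by
  rw [wt_eq, wt_eq, wt_eq, suppF_add]
  rw [card_union_of_disjoint disjoint_sdiff_sdiff]
  have h1 := card_sdiff_add_card_inter (suppF e) (suppF g)
  have h2 := card_sdiff_add_card_inter (suppF g) (suppF e)
  rw [inter_comm] at h2
  omega

lemma not_correctable_big {g : Fin m → ZMod 2} (hgC : g ∈ C) (hg0 : g ≠ 0)
    (hGne : (suppF g).Nonempty) {e : Fin m → ZMod 2}
    (hcap : hammingNorm g + hammingNorm g % 2 ≤ 2 * ((suppF e ∩ suppF g).card))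
    (hj0 : e ((suppF g).min' hGne) = 1) :
    ¬ IsCorrectable (· < ·) (C : Set (Fin m → ZMod 2)) e := by
  intro he
  set j0 := (suppF g).min' hGne with hj0def
  have hadd := wt_add e g
  have hmem : (e + g) - e ∈ (C : Set (Fin m → ZMod 2)) := by
    have h : (e + g) - e = g := by abel
    rw [h]; exact hgC
  have hle := he.1 _ hmem
  have heq : hammingNorm (e + g) = hammingNorm e := by omega
  have hlex := he.2 _ hmem heq
  have hne : e ≠ e + g := by
    intro h
    apply hg0
    have h2 := congrArg (fun x => x - e) h
    simp only [sub_self, add_sub_cancel_left] at h2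
    exact h2.symm
  rcases hlex with h | ⟨i, hpre, hi0, hi1⟩
  · exact hne h
  · have hgi : g i ≠ 0 := by
      intro h
      rw [Pi.add_apply, h, add_zero, hi0] at hi1
      exact zmod2_one_ne_zero hi1.symm
    have hiG : i ∈ suppF g := by
      simp only [suppF, mem_filter, mem_univ, true_and]
      exact hgi
    have hj0le : j0 ≤ i := Finset.min'_le _ _ hiG
    have hj0i : j0 ≠ i := by
      intro h
      rw [← h, hj0] at hi0
      exact zmod2_one_ne_zero hi0
    have hlt : j0 < i := lt_of_le_of_ne hj0le hj0i
    have hpj := hpre j0 hlt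
    have hgj0 : g j0 = 1 := mem_suppF.1 (Finset.min'_mem _ _)
    rw [Pi.add_apply, hj0, hgj0, zmod2_oao] at hpj
    exact zmod2_one_ne_zero hpj

/-- indicator vector of a finset -/
def chi (W : Finset (Fin m)) : Fin m → ZMod 2 := fun j => if j ∈ W then 1 else 0

lemma suppF_chi (W : Finset (Fin m)) : suppF (chi W) = W := by
  ext j
  by_cases h : j ∈ W <;> simp [suppF, chi, h]

lemma wt_chi (W : Finset (Fin m)) : hammingNorm (chi W) = W.card := by
  rw [wt_eq, suppF_chi]

lemma chi_eq_zero {W : Finset (Fin m)} {j : Fin m} (h : j ∉ W) : chi W j = 0 := by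
  simp [chi, h]

lemma eq_of_suppF_eq {u w : Fin m → ZMod 2} (h : suppF u = suppF w) : u = w := by
  funext j
  rcases zmod2_cases (u j) with h1 | h1 <;> rcases zmod2_cases (w j) with h2 | h2
  · rw [h1, h2]
  · exact absurd (h ▸ mem_suppF.2 h2 : j ∈ suppF u) (by rw [not_mem_suppF]; exact h1)
  · exact absurd (h ▸ mem_suppF.2 h1 : j ∈ suppF w) (by rw [not_mem_suppF]; exact h2)
  · rw [h1, h2]

lemma all_correctable {t : ℕ}
    (Hyp : ∀ u, u ∈ Ft C t → ∀ i, u i = 0 →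
      IsCorrectable (· < ·) (C : Set (Fin m → ZMod 2)) (fl i u))
    {u0 : Fin m → ZMod 2} (hu0 : u0 ∈ Ft C t) :
    ∀ w, hammingNorm w = t → IsCorrectable (· < ·) (C : Set (Fin m → ZMod 2)) w := by
  suffices h : ∀ k (u w : Fin m → ZMod 2), u ∈ Ft C t → hammingNorm w = t →
      (suppF w \ suppF u).card = k →
      IsCorrectable (· < ·) (C : Set (Fin m → ZMod 2)) w by
    intro w hw
    exact h _ u0 w hu0 hw rfl
  intro k
  induction k with
  | zero =>
    intro u w hu hw hcard
    have hsub : suppF w ⊆ suppF u := sdiff_eq_empty_iff_subset.1 (card_eq_zero.1 hcard)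
    have hwtu : hammingNorm u = t := (mem_Ft.1 hu).2
    have hsupp : suppF w = suppF u := by
      apply eq_of_subset_of_card_le hsub
      rw [← wt_eq, ← wt_eq, hw, hwtu]
    rw [eq_of_suppF_eq hsupp]
    exact (mem_Ft.1 hu).1
  | succ k ih =>
    intro u w hu hw hcard
    have hwtu : hammingNorm u = t := (mem_Ft.1 hu).2
    obtain ⟨i, hi⟩ := card_pos.1 (by rw [hcard]; exact k.succ_pos)
    rw [mem_sdiff] at hi
    obtain ⟨hiw, hiu⟩ := hi
    have hcards : (suppF u \ suppF w).card = k + 1 := by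
      have h1 := card_sdiff_add_card_inter (suppF w) (suppF u)
      have h2 := card_sdiff_add_card_inter (suppF u) (suppF w)
      rw [inter_comm] at h2
      have h3 : (suppF w).card = t := by rw [← wt_eq, hw]
      have h4 : (suppF u).card = t := by rw [← wt_eq, hwtu]
      omega
    obtain ⟨j, hj⟩ := card_pos.1 (by rw [hcards]; exact k.succ_pos)
    rw [mem_sdiff] at hj
    obtain ⟨hju, hjw⟩ := hj
    have hij : i ≠ j := fun h => hiu (h ▸ hju)
    have hui : u i = 0 := not_mem_suppF.1 hiu
    have hu1 : IsCorrectable (· < ·) (C : Set (Fin m → ZMod 2)) (fl i u) := Hyp u hu i hui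
    have hu1j : fl i u j = 1 := by
      rw [fl_apply, if_neg (Ne.symm hij)]
      exact mem_suppF.1 hju
    have hu2 := step_down hu1 hu1j
    have hwt1 : hammingNorm (fl i u) = t + 1 := by rw [wt_fl0 hui, hwtu]
    have hwt2 : hammingNorm (fl j (fl i u)) = t := by
      have := wt_fl1 hu1j
      omega
    have hsupp2 : suppF (fl j (fl i u)) = (insert i (suppF u)).erase j := by
      rw [suppF_fl1 hu1j, suppF_fl0 hui]
    apply ih (fl j (fl i u)) w (mem_Ft.2 ⟨hu2, hwt2⟩) hw ?_
    have hset : suppF w \ suppF (fl j (fl i u)) = (suppF w \ suppF u).erase i := by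
      rw [hsupp2]
      ext x
      simp only [mem_sdiff, mem_erase, mem_insert, not_and, not_or]
      by_cases hxj : x = j
      · subst hxj
        constructor
        · rintro ⟨hxw, _⟩; exact absurd hxw hjw
        · rintro ⟨_, hxw, _⟩; exact absurd hxw hjw
      · constructor
        · rintro ⟨hxw, h2⟩
          have h3 := h2 hxj
          exact ⟨h3.1, hxw, h3.2⟩
        · rintro ⟨hxi, hxw, hxu⟩
          exact ⟨hxw, fun _ => ⟨hxi, hxu⟩⟩
    rw [hset, card_erase_of_mem (mem_sdiff.2 ⟨hiw, hiu⟩), hcard]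
    omega

lemma exists_witness {t : ℕ} (htm : t < m) (hdle : minDist C ≤ 2 * t + 2)
    (hCb : C ≠ ⊥) (htr : t ≤ covRad C) :
    ∃ u i, u ∈ Ft C t ∧ u i = 0 ∧
      ¬ IsCorrectable (· < ·) (C : Set (Fin m → ZMod 2)) (fl i u) := by
  classical
  by_contra hcon
  push_neg at hcon
  -- a minimum-weight codeword
  have hne : {w | ∃ g ∈ C, g ≠ 0 ∧ hammingNorm g = w}.Nonempty := by
    obtain ⟨x, hx, hx0⟩ := (Submodule.ne_bot_iff C).1 hCb
    exact ⟨hammingNorm x, x, hx, hx0, rfl⟩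
  obtain ⟨g, hgC, hg0, hgwt⟩ := Nat.sInf_mem hne
  set d := minDist C with hd
  have hgd : hammingNorm g = d := hgwt
  have hd1 : 1 ≤ d := by
    rcases Nat.eq_zero_or_pos d with h | h
    · exact absurd (hammingNorm_eq_zero.1 (hgd.trans h)) hg0
    · exact h
  have hGne : (suppF g).Nonempty := by
    rw [← card_pos, ← wt_eq]
    omega
  set j0 := (suppF g).min' hGne with hj0def
  set a := d - d / 2 with ha
  have ha1 : 1 ≤ a := by omega
  have hat : a ≤ t + 1 := by omega
  -- S1 : a-subset of supp g containing j0
  obtain ⟨S0, hS0sub, hS0card⟩ := Finset.exists_subset_card_eq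
    (show a - 1 ≤ ((suppF g).erase j0).card by
      rw [card_erase_of_mem (Finset.min'_mem _ _), ← wt_eq, hgd]
      omega)
  set S1 : Finset (Fin m) := insert j0 S0 with hS1
  have hj0S0 : j0 ∉ S0 := fun h => (Finset.mem_erase.1 (hS0sub h)).1 rfl
  have hS1card : S1.card = a := by
    rw [hS1, card_insert_of_notMem hj0S0, hS0card]
    omega
  have hS1G : S1 ⊆ suppF g := by
    intro x hx
    rcases Finset.mem_insert.1 hx with rfl | hx
    · exact Finset.min'_mem _ _
    · exact Finset.erase_subset _ _ (hS0sub hx)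
  -- E : (t+1)-set containing S1
  obtain ⟨E, hSE, _, hEcard⟩ := Finset.exists_subsuperset_card_eq (n := t + 1 - a + S1.card)
    (Finset.subset_univ S1) (Nat.le_add_left _ _)
    (by
      rw [hS1card, card_univ, Fintype.card_fin]
      omega)
  have hEc : E.card = t + 1 := by
    rw [hEcard, hS1card]
    omega
  have hEne : E.Nonempty := by
    rw [← card_pos, hEc]
    omega
  obtain ⟨i, hiE⟩ := hEne
  set w := chi (E.erase i) with hw
  have hwwt : hammingNorm w = t := by
    rw [hw, wt_chi, card_erase_of_mem hiE, hEc]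
    omega
  have hwi : w i = 0 := chi_eq_zero (fun h => (Finset.mem_erase.1 h).1 rfl)
  -- w is correctable since all weight-t vectors are
  obtain ⟨u0, hu0⟩ := Ft_nonempty (C := C) htr
  have hwcorr : IsCorrectable (· < ·) (C : Set (Fin m → ZMod 2)) w :=
    all_correctable (fun u hu i' hui' => hcon u i' hu hui') hu0 w hwwt
  have hwF : w ∈ Ft C t := mem_Ft.2 ⟨hwcorr, hwwt⟩
  have hflcorr := hcon w i hwF hwi
  -- but fl i w is not correctable
  have hsuppfl : suppF (fl i w) = E := by
    rw [hw, suppF_fl0 (chi_eq_zero (fun h => (Finset.mem_erase.1 h).1 rfl)), suppF_chi,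
      Finset.insert_erase hiE]
  apply not_correctable_big hgC hg0 hGne (e := fl i w) ?_ ?_ hflcorr
  · -- capacity
    have hsub : S1 ⊆ suppF (fl i w) ∩ suppF g := by
      rw [hsuppfl]
      exact Finset.subset_inter hSE hS1G
    have hcard2 : a ≤ (suppF (fl i w) ∩ suppF g).card := hS1card ▸ Finset.card_le_card hsub
    rw [hgd]
    omega
  · rw [← hj0def, ← mem_suppF, hsuppfl]
    exact hSE (Finset.mem_insert_self j0 S0)

end S11
theorem stmt11 (m : ℕ) (C : Submodule (ZMod 2) (Fin m → ZMod 2)) (hC : C ≠ ⊥) :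
    ∀ t < m,
      epsC (· < ·) (C : Set (Fin m → ZMod 2)) (t + 1) ≤
          epsC (· < ·) (C : Set (Fin m → ZMod 2)) t ∧
        ((minDist C - 1) / 2 ≤ t → t ≤ covRad C →
          epsC (· < ·) (C : Set (Fin m → ZMod 2)) (t + 1) <
            epsC (· < ·) (C : Set (Fin m → ZMod 2)) t) := by
  intro t ht
  have hcp1 : 0 < m.choose t := Nat.choose_pos (le_of_lt ht)
  have hcp2 : 0 < m.choose (t + 1) := Nat.choose_pos ht
  have hcp1R : (0 : ℝ) < (m.choose t : ℝ) := by exact_mod_cast hcp1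
  have hcp2R : (0 : ℝ) < (m.choose (t + 1) : ℝ) := by exact_mod_cast hcp2
  have hcount := S11.count_le (C := C) t
  constructor
  · rw [S11.epsC_eq, S11.epsC_eq, div_le_div_iff₀ hcp2R hcp1R]
    have key : (S11.Ft C (t + 1)).card * m.choose t ≤ (S11.Ft C t).card * m.choose (t + 1) := by
      have h2 : (t + 1) * ((S11.Ft C (t + 1)).card * m.choose t) ≤
          (t + 1) * ((S11.Ft C t).card * m.choose (t + 1)) := by
        have e3 : m.choose t * (m - t) = m.choose (t + 1) * (t + 1) :=
          (Nat.choose_succ_right_eq m t).symm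
        calc (t + 1) * ((S11.Ft C (t + 1)).card * m.choose t)
            = ((t + 1) * (S11.Ft C (t + 1)).card) * m.choose t := by ring
          _ ≤ ((m - t) * (S11.Ft C t).card) * m.choose t :=
            Nat.mul_le_mul_right _ hcount.1
          _ = (S11.Ft C t).card * (m.choose t * (m - t)) := by ring
          _ = (S11.Ft C t).card * (m.choose (t + 1) * (t + 1)) := by rw [e3]
          _ = (t + 1) * ((S11.Ft C t).card * m.choose (t + 1)) := by ring
      exact Nat.le_of_mul_le_mul_left h2 t.succ_pos
    exact_mod_cast key
  · intro h1 h2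
    have hdle : minDist C ≤ 2 * t + 2 := by omega
    obtain ⟨u, i, huF, hui, hnc⟩ := S11.exists_witness (C := C) ht hdle hC h2
    have hstrict := hcount.2 ⟨u, i, huF, hui, hnc⟩
    rw [S11.epsC_eq, S11.epsC_eq, div_lt_div_iff₀ hcp2R hcp1R]
    have key : (S11.Ft C (t + 1)).card * m.choose t < (S11.Ft C t).card * m.choose (t + 1) := by
      have h3 : (t + 1) * ((S11.Ft C (t + 1)).card * m.choose t) <
          (t + 1) * ((S11.Ft C t).card * m.choose (t + 1)) := by
        have e3 : m.choose t * (m - t) = m.choose (t + 1) * (t + 1) :=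
          (Nat.choose_succ_right_eq m t).symm
        calc (t + 1) * ((S11.Ft C (t + 1)).card * m.choose t)
            = ((t + 1) * (S11.Ft C (t + 1)).card) * m.choose t := by ring
          _ < ((m - t) * (S11.Ft C t).card) * m.choose t := by
            exact Nat.mul_lt_mul_of_lt_of_le hstrict (le_refl _) hcp1
          _ = (S11.Ft C t).card * (m.choose t * (m - t)) := by ring
          _ = (S11.Ft C t).card * (m.choose (t + 1) * (t + 1)) := by rw [e3]
          _ = (t + 1) * ((S11.Ft C t).card * m.choose (t + 1)) := by ring
      exact Nat.lt_of_mul_lt_mul_left h3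
    exact_mod_cast key
end

section
/- Let C be a linear code over F_2 of length m and dimension k, with coset leaders chosen as the lexicographically smallest minimum-weight vectors. Then for every t = 0, 1, …, m, one has ε_C(t) · Σ_{i=0}^{t} binom(m,i) ≤ 2^{m−k}. -/
section Aux
open Finset Function


lemma zmod2_ne_zero_iff (x : ZMod 2) : x ≠ 0 ↔ x = 1 := by revert x; decide

lemma zmod2_cases (x : ZMod 2) : x = 0 ∨ x = 1 := by revert x; decide


lemma lexle_antisymm {m : ℕ} {a b : Fin m → ZMod 2}
    (h1 : LexLe (· < ·) a b) (h2 : LexLe (· < ·) b a) : a = b := by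
  rcases h1 with h1 | ⟨i, hi, hai, hbi⟩
  · exact h1
  rcases h2 with h2 | ⟨i', hi', hbi', hai'⟩
  · exact h2.symm
  exfalso
  rcases lt_trichotomy i i' with h | h | h
  · have := hi' i h; rw [hbi, hai] at this; exact one_ne_zero this
  · subst h; rw [hai] at hai'; exact one_ne_zero hai'.symm
  · have := hi i' h; rw [hai', hbi'] at this; exact one_ne_zero this

-- hammingNorm facts
lemma supp_eq {m : ℕ} (e : Fin m → ZMod 2) :
    hammingNorm e = #{i | e i ≠ 0} := rfl

lemma norm_update_zero {m : ℕ} (e : Fin m → ZMod 2) (j : Fin m) (hj : e j = 1) :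
    hammingNorm (update e j 0) + 1 = hammingNorm e := by
  have hset : ({i | update e j 0 i ≠ 0} : Finset (Fin m)) = ({i | e i ≠ 0} : Finset (Fin m)).erase j := by
    ext i
    by_cases h : i = j
    · subst h; simp
    · simp [h, Function.update_of_ne h]
  rw [supp_eq, supp_eq, hset]
  exact Finset.card_erase_add_one (by simp [hj])

lemma norm_update_one {m : ℕ} (f : Fin m → ZMod 2) (j : Fin m) (hj : f j = 0) :
    hammingNorm (update f j 1) = hammingNorm f + 1 := by
  have hset : ({i | update f j 1 i ≠ 0} : Finset (Fin m)) = insert j ({i | f i ≠ 0} : Finset (Fin m)) := by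
    ext i
    by_cases h : i = j
    · subst h; simp
    · simp [h, Function.update_of_ne h]
  rw [supp_eq, supp_eq, hset, Finset.card_insert_of_notMem (by simp [hj])]

lemma add_single_eq_update_zero {m : ℕ} (f : Fin m → ZMod 2) (j : Fin m) (hj : f j = 1) :
    f + Pi.single j 1 = update f j 0 := by
  funext i
  by_cases h : i = j
  · subst h; simp [hj]; decide
  · simp [h, Function.update_of_ne h, Pi.single_apply]

lemma add_single_eq_update_one {m : ℕ} (f : Fin m → ZMod 2) (j : Fin m) (hj : f j = 0) :
    f + Pi.single j 1 = update f j 1 := by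
  funext i
  by_cases h : i = j
  · subst h; simp [hj]
  · simp [h, Function.update_of_ne h, Pi.single_apply]

lemma card_zero_eq {m : ℕ} (b : Fin m → ZMod 2) :
    #({i | b i = 0} : Finset (Fin m)) = m - hammingNorm b := by
  have : ({i | b i = 0} : Finset (Fin m)) = Finset.univ \ ({i | b i ≠ 0} : Finset (Fin m)) := by
    ext i
    rcases zmod2_cases (b i) with h | h <;> simp [h]
  rw [this, Finset.card_sdiff_of_subset (Finset.subset_univ _), supp_eq, Finset.card_univ, Fintype.card_fin]

lemma norm_add_single_le {m : ℕ} (f : Fin m → ZMod 2) (j : Fin m) :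
    hammingNorm (f + Pi.single j 1) ≤ hammingNorm f + 1 := by
  rcases zmod2_cases (f j) with h | h
  · rw [add_single_eq_update_one f j h, norm_update_one f j h]
  · rw [add_single_eq_update_zero f j h]
    have := norm_update_zero f j h
    omega

lemma isCorrectable_update {m : ℕ} {C : Submodule (ZMod 2) (Fin m → ZMod 2)}
    {e : Fin m → ZMod 2} (he : IsCorrectable (· < ·) (C : Set (Fin m → ZMod 2)) e)
    {j : Fin m} (hj : e j = 1) :
    IsCorrectable (· < ·) (C : Set (Fin m → ZMod 2)) (update e j 0) := by
  set e' := update e j 0 with he'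
  have hsub : e - e' = Pi.single j 1 := by
    funext i
    by_cases h : i = j
    · subst h; simp [he', hj]
    · simp [he', update_of_ne h, Pi.single_apply, h]
  have hkey : ∀ f : Fin m → ZMod 2, (f + Pi.single j 1) - e = f - e' := by
    intro f; rw [← hsub]; abel
  have hne : hammingNorm e' + 1 = hammingNorm e := norm_update_zero e j hj
  constructor
  · intro f hf
    have hf2 : (f + Pi.single j 1) - e ∈ (C : Set (Fin m → ZMod 2)) := by
      rw [hkey f]; exact hf
    have h1 := he.1 _ hf2
    have h2 := norm_add_single_le f j
    omega
  · intro f hf hwt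
    have hf2 : (f + Pi.single j 1) - e ∈ (C : Set (Fin m → ZMod 2)) := by
      rw [hkey f]; exact hf
    have h1 := he.1 _ hf2
    have hfj : f j = 0 := by
      by_contra hfj0
      have hfj1 : f j = 1 := (zmod2_cases (f j)).resolve_left hfj0
      have := norm_update_zero f j hfj1
      rw [add_single_eq_update_zero f j hfj1] at h1
      omega
    have heq : hammingNorm (f + Pi.single j 1) = hammingNorm e := by
      rw [add_single_eq_update_one f j hfj, norm_update_one f j hfj]; omega
    have hlex := he.2 _ hf2 heq
    rcases hlex with heqv | ⟨i, hlow, hei, hfi⟩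
    · left
      funext i
      by_cases h : i = j
      · subst h; rw [he', update_self, hfj]
      · rw [he', update_of_ne h, heqv, add_single_eq_update_one f j hfj, update_of_ne h]
    · right
      have hij : i ≠ j := by
        intro h; rw [h, hj] at hei; exact one_ne_zero hei
      refine ⟨i, ?_, ?_, ?_⟩
      · intro j' hj'
        by_cases h : j' = j
        · subst h; rw [he', update_self, hfj]
        · rw [he', update_of_ne h]
          have := hlow j' hj'
          rwa [add_single_eq_update_one f j hfj, update_of_ne h] at this
      · rw [he', update_of_ne hij]; exact hei
      · rw [add_single_eq_update_one f j hfj, update_of_ne hij] at hfi; exact hfi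

lemma recover_update {m : ℕ} {a b : Fin m → ZMod 2} {j : Fin m}
    (h1 : a j = 1) (h2 : b = update a j 0) : a = update b j 1 := by
  funext i
  by_cases h : i = j
  · subst h; rw [update_self, h1]
  · rw [update_of_ne h, h2, update_of_ne h]

lemma natCard_eq {m : ℕ} (p : (Fin m → ZMod 2) → Prop) [DecidablePred p] :
    Nat.card {e : Fin m → ZMod 2 | p e} = #({e | p e} : Finset (Fin m → ZMod 2)) := by
  rw [Nat.card_eq_fintype_card]
  exact Fintype.card_subtype p

lemma step_count {m : ℕ} (C : Submodule (ZMod 2) (Fin m → ZMod 2)) (s : ℕ)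
    (hs : 1 ≤ s) (hsm : s ≤ m) :
    Nat.card {e : Fin m → ZMod 2 |
        IsCorrectable (· < ·) (C : Set (Fin m → ZMod 2)) e ∧ hammingNorm e = s} * s ≤
    Nat.card {e : Fin m → ZMod 2 |
        IsCorrectable (· < ·) (C : Set (Fin m → ZMod 2)) e ∧ hammingNorm e = s - 1} *
      (m - s + 1) := by
  classical
  rw [natCard_eq, natCard_eq]
  set A : Finset (Fin m → ZMod 2) :=
    {e | IsCorrectable (· < ·) (C : Set (Fin m → ZMod 2)) e ∧ hammingNorm e = s} with hA
  set B : Finset (Fin m → ZMod 2) :=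
    {e | IsCorrectable (· < ·) (C : Set (Fin m → ZMod 2)) e ∧ hammingNorm e = s - 1} with hB
  refine Finset.card_mul_le_card_mul (fun a b => ∃ j, a j = 1 ∧ b = update a j 0) ?_ ?_
  · -- ∀ a ∈ A, s ≤ #(B.bipartiteAbove r a)
    intro a ha
    rw [hA, Finset.mem_filter] at ha
    obtain ⟨-, hcor, hwt⟩ := ha
    have hsupp : #({i | a i = 1} : Finset (Fin m)) = s := by
      rw [← hwt]
      apply Finset.card_bij (fun i _ => i) <;> simp [zmod2_ne_zero_iff]
    rw [← hsupp]
    apply Finset.card_le_card_of_injOn (fun j => update a j 0)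
    · intro j hj
      rw [Finset.mem_coe, Finset.mem_filter] at hj
      obtain ⟨-, hj1⟩ := hj
      simp only [Finset.mem_coe]; rw [Finset.mem_bipartiteAbove]
      refine ⟨?_, j, hj1, rfl⟩
      rw [hB, Finset.mem_filter]
      have := norm_update_zero a j hj1
      exact ⟨Finset.mem_univ _, isCorrectable_update hcor hj1, by omega⟩
    · intro j1 hj1 j2 hj2 heq
      rw [Finset.mem_coe, Finset.mem_filter] at hj1 hj2
      by_contra hne
      have h0 : update a j1 0 = update a j2 0 := heq
      have h1 : update a j1 0 j1 = update a j2 0 j1 := by rw [h0]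
      rw [update_self, update_of_ne hne, hj1.2] at h1
      exact one_ne_zero h1.symm
  · -- ∀ b ∈ B, #(A.bipartiteBelow r b) ≤ m - s + 1
    intro b hb
    rw [hB, Finset.mem_filter] at hb
    obtain ⟨-, hcorb, hwtb⟩ := hb
    have hzero : #({i | b i = 0} : Finset (Fin m)) = m - s + 1 := by
      rw [card_zero_eq, hwtb]; omega
    rw [← hzero]
    apply Finset.card_le_card_of_injOn
      (fun a => if h : ∃ j, a j = 1 ∧ b = update a j 0 then h.choose else ⟨0, by omega⟩)
    · intro a ha
      rw [Finset.mem_coe, Finset.mem_bipartiteBelow] at ha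
      obtain ⟨-, hr⟩ := ha
      simp only [Finset.mem_coe]; rw [dif_pos hr]
      obtain ⟨h1, h2⟩ := hr.choose_spec
      rw [Finset.mem_filter]
      refine ⟨Finset.mem_univ _, ?_⟩
      have h3 := congrFun h2 hr.choose
      rw [update_self] at h3
      exact h3
    · intro a1 ha1 a2 ha2 heq
      rw [Finset.mem_coe, Finset.mem_bipartiteBelow] at ha1 ha2
      simp only [dif_pos ha1.2, dif_pos ha2.2] at heq
      obtain ⟨h11, h12⟩ := ha1.2.choose_spec
      obtain ⟨h21, h22⟩ := ha2.2.choose_spec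
      rw [recover_update h11 h12, recover_update h21 h22, heq]

lemma mono_count {m : ℕ} (C : Submodule (ZMod 2) (Fin m → ZMod 2)) (t : ℕ) (ht : t ≤ m) :
    ∀ j, j ≤ t →
    Nat.card {e : Fin m → ZMod 2 |
        IsCorrectable (· < ·) (C : Set (Fin m → ZMod 2)) e ∧ hammingNorm e = t} *
      m.choose (t - j) ≤
    Nat.card {e : Fin m → ZMod 2 |
        IsCorrectable (· < ·) (C : Set (Fin m → ZMod 2)) e ∧ hammingNorm e = t - j} *
      m.choose t := by
  set N : ℕ → ℕ := fun i => Nat.card {e : Fin m → ZMod 2 |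
        IsCorrectable (· < ·) (C : Set (Fin m → ZMod 2)) e ∧ hammingNorm e = i} with hN
  intro j
  induction j with
  | zero => intro _; simp
  | succ j ih =>
    intro hj
    have IH := ih (by omega)
    set s := t - j with hs
    have hs1 : 1 ≤ s := by omega
    have hsm : s ≤ m := by omega
    have hstep : N s * s ≤ N (s - 1) * (m - s + 1) := step_count C s hs1 hsm
    have hchoose : m.choose s * s = m.choose (s - 1) * (m - s + 1) := by
      have h := Nat.choose_succ_right_eq m (s - 1)
      have e1 : s - 1 + 1 = s := by omega
      have e2 : m - (s - 1) = m - s + 1 := by omega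
      rw [e1, e2] at h
      exact h
    have hts : t - (j + 1) = s - 1 := by omega
    rw [hts]
    have hpos : 0 < m - s + 1 := by omega
    refine Nat.le_of_mul_le_mul_right ?_ hpos
    calc N t * m.choose (s - 1) * (m - s + 1) = N t * m.choose s * s := by
          rw [mul_assoc, mul_assoc, ← hchoose]
      _ ≤ N s * m.choose t * s := Nat.mul_le_mul_right s IH
      _ = N s * s * m.choose t := by ring
      _ ≤ N (s - 1) * (m - s + 1) * m.choose t := Nat.mul_le_mul_right _ hstep
      _ = N (s - 1) * m.choose t * (m - s + 1) := by ring

lemma total_count {m k : ℕ} (C : Submodule (ZMod 2) (Fin m → ZMod 2))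
    (hk : Module.finrank (ZMod 2) C = k) :
    Nat.card {e : Fin m → ZMod 2 | IsCorrectable (· < ·) (C : Set (Fin m → ZMod 2)) e} ≤
      2 ^ (m - k) := by
  have hinj : Function.Injective
      (fun e : {e : Fin m → ZMod 2 | IsCorrectable (· < ·) (C : Set (Fin m → ZMod 2)) e} =>
        Submodule.Quotient.mk (p := C) e.1) := by
    rintro ⟨e1, h1⟩ ⟨e2, h2⟩ h
    simp only [Submodule.Quotient.eq] at h
    have h21 : e2 - e1 ∈ (C : Set (Fin m → ZMod 2)) := by
      have := C.neg_mem h; simpa using this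
    have h12 : e1 - e2 ∈ (C : Set (Fin m → ZMod 2)) := h
    have hle1 := h1.1 e2 h21
    have hle2 := h2.1 e1 h12
    have heq : hammingNorm e1 = hammingNorm e2 := le_antisymm hle1 hle2
    have l1 := h1.2 e2 h21 heq.symm
    have l2 := h2.2 e1 h12 heq
    exact Subtype.ext (lexle_antisymm l1 l2)
  have hle := Nat.card_le_card_of_injective _ hinj
  refine hle.trans ?_
  have hfr : Module.finrank (ZMod 2) ((Fin m → ZMod 2) ⧸ C) = m - k := by
    have h := Submodule.finrank_quotient_add_finrank C
    rw [hk] at h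
    have hm : Module.finrank (ZMod 2) (Fin m → ZMod 2) = m := by
      simp [Module.finrank_pi]
    rw [hm] at h
    omega
  have : Nat.card ((Fin m → ZMod 2) ⧸ C) = 2 ^ (m - k) := by
    have := Fintype.ofFinite ((Fin m → ZMod 2) ⧸ C)
    rw [Nat.card_eq_fintype_card, Module.card_eq_pow_finrank (K := ZMod 2), ZMod.card, hfr]
  omega

lemma sum_count {m : ℕ} (C : Submodule (ZMod 2) (Fin m → ZMod 2)) (t : ℕ) :
    ∑ i ∈ Finset.Iic t, Nat.card {e : Fin m → ZMod 2 |
        IsCorrectable (· < ·) (C : Set (Fin m → ZMod 2)) e ∧ hammingNorm e = i} ≤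
    Nat.card {e : Fin m → ZMod 2 | IsCorrectable (· < ·) (C : Set (Fin m → ZMod 2)) e} := by
  classical
  rw [natCard_eq]
  have h1 : ∀ i, Nat.card {e : Fin m → ZMod 2 |
      IsCorrectable (· < ·) (C : Set (Fin m → ZMod 2)) e ∧ hammingNorm e = i} =
      #({e | IsCorrectable (· < ·) (C : Set (Fin m → ZMod 2)) e ∧ hammingNorm e = i} :
        Finset (Fin m → ZMod 2)) := fun i => natCard_eq _
  simp_rw [h1]
  set T : Finset (Fin m → ZMod 2) :=
    {e | IsCorrectable (· < ·) (C : Set (Fin m → ZMod 2)) e ∧ hammingNorm e ≤ t} with hT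
  have hfib : #T = ∑ i ∈ Finset.Iic t, #(T.filter (fun e => hammingNorm e = i)) := by
    apply Finset.card_eq_sum_card_fiberwise
    intro e he
    rw [hT, Finset.mem_coe, Finset.mem_filter] at he
    simpa using he.2.2
  have hcong : ∀ i ∈ Finset.Iic t,
      #(T.filter (fun e => hammingNorm e = i)) =
      #({e | IsCorrectable (· < ·) (C : Set (Fin m → ZMod 2)) e ∧ hammingNorm e = i} :
        Finset (Fin m → ZMod 2)) := by
    intro i hi
    rw [Finset.mem_Iic] at hi
    congr 1
    ext e
    simp only [hT, Finset.mem_filter, Finset.mem_univ, true_and]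
    constructor
    · rintro ⟨⟨hc, -⟩, hw⟩; exact ⟨hc, hw⟩
    · rintro ⟨hc, hw⟩; exact ⟨⟨hc, by omega⟩, hw⟩
  rw [← Finset.sum_congr rfl hcong, ← hfib]
  apply Finset.card_le_card
  intro e he
  rw [hT, Finset.mem_filter] at he
  rw [Finset.mem_filter]
  exact ⟨he.1, he.2.1⟩


end Aux

theorem stmt14 (m k : ℕ) (C : Submodule (ZMod 2) (Fin m → ZMod 2))
    (hk : Module.finrank (ZMod 2) C = k) (t : ℕ) (ht : t ≤ m) :
    epsC (· < ·) (C : Set (Fin m → ZMod 2)) t * (∑ i ∈ Finset.Iic t, (m.choose i : ℝ)) ≤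
      2 ^ (m - k) := by
  simp only [epsC, Fintype.card_fin]
  set N : ℕ → ℕ := fun i => Nat.card {e : Fin m → ZMod 2 |
      IsCorrectable (· < ·) (C : Set (Fin m → ZMod 2)) e ∧ hammingNorm e = i} with hN
  have htotal : ∑ i ∈ Finset.Iic t, N i ≤ 2 ^ (m - k) :=
    (sum_count C t).trans (total_count C hk)
  have hcpos : (0 : ℝ) < (m.choose t : ℝ) := by
    exact_mod_cast Nat.choose_pos ht
  rw [div_mul_eq_mul_div, div_le_iff₀ hcpos]
  calc (N t : ℝ) * ∑ i ∈ Finset.Iic t, (m.choose i : ℝ)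
      = ∑ i ∈ Finset.Iic t, (N t : ℝ) * (m.choose i : ℝ) := by rw [Finset.mul_sum]
    _ ≤ ∑ i ∈ Finset.Iic t, (N i : ℝ) * (m.choose t : ℝ) := by
        apply Finset.sum_le_sum
        intro i hi
        rw [Finset.mem_Iic] at hi
        have h := mono_count C t ht (t - i) (by omega)
        have hti : t - (t - i) = i := by omega
        rw [hti] at h
        exact_mod_cast h
    _ = (∑ i ∈ Finset.Iic t, (N i : ℝ)) * (m.choose t : ℝ) := by rw [Finset.sum_mul]
    _ ≤ (2 : ℝ) ^ (m - k) * (m.choose t : ℝ) := by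
        refine mul_le_mul_of_nonneg_right ?_ hcpos.le
        exact_mod_cast htotal
end

section
/- Let n and r be integers with 0 ≤ r ≤ n. The Reed–Muller code RM(n,r) has exactly 2^{Σ_{i=0}^{r} binom(n,i)} elements; that is, its dimension as an F_2-vector space is Σ_{i=0}^{r} binom(n,i). -/
open Finset MvPolynomial

/-- Multilinear monomial functions. -/
noncomputable def mon (n : ℕ) (S : Finset (Fin n)) : BF n := fun x => ∏ i ∈ S, x i

lemma zmod2_pow_succ (a : ZMod 2) (k : ℕ) : a ^ (k + 1) = a := by
  induction k with
  | zero => simp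
  | succ k ih =>
    rw [pow_succ, ih]
    have h2 : ∀ a : ZMod 2, a * a = a := by decide
    exact h2 a

lemma mon_linearIndependent (n : ℕ) : LinearIndependent (ZMod 2) (mon n) := by
  rw [Fintype.linearIndependent_iff]
  intro g hg
  by_contra h
  push_neg at h
  obtain ⟨S, hS⟩ := h
  set T := Finset.univ.filter (fun S : Finset (Fin n) => g S ≠ 0) with hT
  have hTne : T.Nonempty := ⟨S, by simp [hT, hS]⟩
  obtain ⟨S₀, hS₀T, hmin⟩ := T.exists_min_image Finset.card hTne
  have h0 := congrFun hg (fun i => if i ∈ S₀ then 1 else 0)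
  rw [Finset.sum_apply] at h0
  have hmon : ∀ S : Finset (Fin n),
      mon n S (fun i => if i ∈ S₀ then 1 else 0) = if S ⊆ S₀ then 1 else 0 := by
    intro S
    by_cases hsub : S ⊆ S₀
    · simp only [hsub, if_true, mon]
      rw [Finset.prod_congr rfl (fun i hi => if_pos (hsub hi))]
      simp
    · simp only [hsub, if_false, mon]
      obtain ⟨i, hiS, hiS₀⟩ := Finset.not_subset.mp hsub
      exact Finset.prod_eq_zero hiS (if_neg hiS₀)
  have hterm : ∀ S : Finset (Fin n),
      (g S • mon n S) (fun i => if i ∈ S₀ then 1 else 0)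
        = if S ⊆ S₀ then g S else 0 := by
    intro S
    simp only [Pi.smul_apply, hmon, smul_eq_mul]
    by_cases hsub : S ⊆ S₀ <;> simp [hsub]
  rw [Finset.sum_congr rfl (fun S _ => hterm S)] at h0
  have hsum : ∑ S : Finset (Fin n), (if S ⊆ S₀ then g S else 0) = g S₀ := by
    rw [Finset.sum_eq_single_of_mem S₀ (Finset.mem_univ _)]
    · simp
    · intro S _ hne
      by_cases hsub : S ⊆ S₀
      · simp only [hsub, if_true]
        by_contra hgS
        have hST : S ∈ T := by simp [hT, hgS]
        have h1 : S₀.card ≤ S.card := hmin S hST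
        exact hne (Finset.eq_of_subset_of_card_le hsub h1)
      · simp [hsub]
  rw [hsum] at h0
  have : g S₀ ≠ 0 := by simpa [hT] using hS₀T
  exact this h0

/-- RM as a submodule. -/
noncomputable def RMsub (n r : ℕ) : Submodule (ZMod 2) (BF n) where
  carrier := RM n r
  add_mem' := by
    rintro f g ⟨p, hp, hep⟩ ⟨q, hq, heq⟩
    exact ⟨p + q, le_trans (totalDegree_add p q) (max_le hp hq),
      fun x => by simp [hep x, heq x]⟩
  zero_mem' := ⟨0, by simp⟩
  smul_mem' := by
    rintro c f ⟨p, hp, hep⟩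
    exact ⟨c • p, le_trans (totalDegree_smul_le c p) hp,
      fun x => by simp [hep x]⟩

lemma eval_monomial_eq_mon (n : ℕ) (d : Fin n →₀ ℕ) (c : ZMod 2)
    (x : Fin n → ZMod 2) :
    MvPolynomial.eval x (monomial d c) = c * mon n d.support x := by
  rw [eval_monomial]
  congr 1
  rw [Finsupp.prod]
  refine Finset.prod_congr rfl fun i hi => ?_
  have : d i ≠ 0 := Finsupp.mem_support_iff.mp hi
  obtain ⟨k, hk⟩ := Nat.exists_eq_succ_of_ne_zero this
  rw [hk, zmod2_pow_succ]

lemma RMsub_eq_span (n r : ℕ) :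
    RMsub n r = Submodule.span (ZMod 2) (mon n '' {S | S.card ≤ r}) := by
  apply le_antisymm
  · rintro f ⟨p, hp, hep⟩
    have hf : f = ∑ d ∈ p.support, MvPolynomial.coeff d p • mon n d.support := by
      funext x
      rw [← hep x]
      conv_lhs => rw [p.as_sum]
      rw [map_sum, Finset.sum_apply]
      exact Finset.sum_congr rfl fun d _ => eval_monomial_eq_mon n d _ x
    rw [hf]
    refine Submodule.sum_mem _ fun d hd => Submodule.smul_mem _ _ ?_
    refine Submodule.subset_span ⟨d.support, ?_, rfl⟩
    have h1 : d.support.card ≤ ∑ i ∈ d.support, d i := by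
      calc d.support.card = ∑ _i ∈ d.support, 1 := by simp
        _ ≤ ∑ i ∈ d.support, d i :=
          Finset.sum_le_sum fun i hi =>
            Nat.one_le_iff_ne_zero.mpr (Finsupp.mem_support_iff.mp hi)
    have h2 : (∑ i ∈ d.support, d i) ≤ p.totalDegree :=
      MvPolynomial.le_totalDegree hd
    exact le_trans h1 (le_trans h2 hp)
  · rw [Submodule.span_le]
    rintro _ ⟨S, hS, rfl⟩
    refine ⟨∏ i ∈ S, X i, ?_, fun x => by simp [mon]⟩
    calc (∏ i ∈ S, (X i : MvPolynomial (Fin n) (ZMod 2))).totalDegree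
        ≤ ∑ i ∈ S, (X i : MvPolynomial (Fin n) (ZMod 2)).totalDegree :=
          totalDegree_finset_prod S _
      _ = S.card := by simp [totalDegree_X]
      _ ≤ r := hS

lemma card_subsets (n r : ℕ) :
    (Finset.univ.filter fun S : Finset (Fin n) => S.card ≤ r).card
      = ∑ i ∈ Finset.range (r + 1), n.choose i := by
  have h : (Finset.univ.filter fun S : Finset (Fin n) => S.card ≤ r)
      = (Finset.range (r + 1)).biUnion
          (fun i => Finset.univ.powersetCard i) := by
    ext S
    simp only [Finset.mem_filter, Finset.mem_univ, true_and, Finset.mem_biUnion,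
      Finset.mem_range, Finset.mem_powersetCard, Nat.lt_succ_iff]
    constructor
    · intro h; exact ⟨S.card, h, Finset.subset_univ S, rfl⟩
    · rintro ⟨i, hi, -, rfl⟩; exact hi
  rw [h, Finset.card_biUnion]
  · refine Finset.sum_congr rfl fun i _ => ?_
    rw [Finset.card_powersetCard, Finset.card_univ, Fintype.card_fin]
  · intro i _ j _ hij
    simp only [Finset.disjoint_left, Finset.mem_powersetCard]
    rintro S ⟨-, rfl⟩ ⟨-, h⟩
    exact hij h

theorem stmt17 (n r : ℕ) (hrn : r ≤ n) :
    Nat.card (RM n r) = 2 ^ (∑ i ∈ Finset.range (r + 1), n.choose i) := by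
  have hcoe : RM n r = (RMsub n r : Set (BF n)) := rfl
  rw [hcoe]
  have hc : Nat.card (RMsub n r) = 2 ^ Module.finrank (ZMod 2) (RMsub n r) := by
    haveI : Fintype (RMsub n r) := Fintype.ofFinite _
    rw [Nat.card_eq_fintype_card, Module.card_eq_pow_finrank (K := ZMod 2), ZMod.card]
  rw [show Nat.card ↥((RMsub n r : Set (BF n))) = Nat.card (RMsub n r) from rfl, hc]
  congr 1
  rw [RMsub_eq_span]
  have hli : LinearIndependent (ZMod 2)
      (fun S : {S : Finset (Fin n) // S.card ≤ r} => mon n S.1) :=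
    (mon_linearIndependent n).comp _ Subtype.val_injective
  have hrange : Set.range (fun S : {S : Finset (Fin n) // S.card ≤ r} => mon n S.1)
      = mon n '' {S | S.card ≤ r} := by
    ext f
    simp [Set.range, Set.mem_image]
  rw [← hrange, finrank_span_eq_card hli, Fintype.card_subtype, card_subsets]
end
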